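/- Let G be a simple graph. For every vertex P of G, the rank Weierstrass set of G at P is contained in the functional Weierstrass set of G at P, i.e., H_r(P) ⊆ H_f(P). -/

import Mathlib

open scoped Classical

/-- A graph: a finite connected multigraph with no loop edges, given by a symmetric
edge-multiplicity function on a finite nonempty vertex type. -/
structure Multigraph where
  V : Type
  [fintypeV : Fintype V]
  [decEqV : DecidableEq V]
  [nonemptyV : Nonempty V]
  adj : V → V → ℕ
  adj_symm : ∀ u v, adj u v = adj v u
  adj_loopless : ∀ v, adj v v = 0
  conn : ∀ u v, Relation.ReflTransGen (fun a b => adj a b ≠ 0) u v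

attribute [instance] Multigraph.fintypeV Multigraph.decEqV Multigraph.nonemptyV

namespace Multigraph

variable (G : Multigraph)

/-- A simple graph: no multiple edges and more than one vertex. -/
def Simple : Prop :=
  (∀ u v, G.adj u v ≤ 1) ∧ 1 < Fintype.card G.V

/-- The degree of a divisor. -/
def deg (D : G.V → ℤ) : ℤ := ∑ v, D v

/-- A divisor is effective if all its coefficients are nonnegative. -/
def Effective (D : G.V → ℤ) : Prop := ∀ v, 0 ≤ D v

/-- The Laplacian of an integer-valued function on the vertices. -/
def lap (f : G.V → ℤ) : G.V → ℤ := fun v => ∑ w, (G.adj v w : ℤ) * (f v - f w)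

/-- The linear system `|D|` is nonempty, i.e. `D` is linearly equivalent to an
effective divisor. -/
def LinNonempty (D : G.V → ℤ) : Prop :=
  ∃ f : G.V → ℤ, G.Effective (D - G.lap f)

/-- The Baker–Norine rank of a divisor: `-1` if `|D| = ∅`, otherwise the maximal
`k` such that `|D - E| ≠ ∅` for every effective divisor `E` of degree `k`. -/
noncomputable def rank (D : G.V → ℤ) : ℤ :=
  if G.LinNonempty D then
    ((sSup {k : ℕ | ∀ E : G.V → ℤ, G.Effective E → G.deg E = (k : ℤ) →
        G.LinNonempty (D - E)} : ℕ) : ℤ)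
  else -1

/-- The divisor `n • P`. -/
def pt (P : G.V) (n : ℤ) : G.V → ℤ := fun v => if v = P then n else 0

/-- The rank Weierstrass set of `G` at `P`. -/
def Hr (P : G.V) : Set ℕ :=
  {n : ℕ | G.rank (G.pt P ((n : ℤ) - 1)) < G.rank (G.pt P (n : ℤ))}

/-- The functional Weierstrass set of `G` at `P`: pole orders at `P` of functions
with a unique pole at `P`. -/
def Hf (P : G.V) : Set ℕ :=
  {n : ℕ | ∃ f : G.V → ℤ, G.lap f P = -(n : ℤ) ∧ ∀ Q, Q ≠ P → 0 ≤ G.lap f Q}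

/-- The number of edges joining `Q` to vertices outside `A`. -/
def outdeg (A : Finset G.V) (Q : G.V) : ℕ := ∑ R ∈ Aᶜ, G.adj Q R

/-- A divisor is `P`-reduced. -/
def Reduced (P : G.V) (D : G.V → ℤ) : Prop :=
  (∀ Q, Q ≠ P → 0 ≤ D Q) ∧
  ∀ A : Finset G.V, A.Nonempty → P ∉ A → ∃ Q ∈ A, D Q < (G.outdeg A Q : ℤ)

/-- `G` is the graph `B_n` with two vertices joined by `n` parallel edges. -/
def IsBanana (n : ℕ) : Prop :=
  Fintype.card G.V = 2 ∧ ∀ u v, u ≠ v → G.adj u v = n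

/-- `G` is the complete graph on `n` vertices. -/
def IsComplete (n : ℕ) : Prop :=
  Fintype.card G.V = n ∧ ∀ u v, u ≠ v → G.adj u v = 1

/-- `G` is the complete bipartite graph with parts `A` (of size `m`) and its
complement (of size `n`). -/
def IsCompleteBipartite (A : Finset G.V) (m n : ℕ) : Prop :=
  A.card = m ∧ Aᶜ.card = n ∧
  ∀ u v, G.adj u v = if (u ∈ A ∧ v ∉ A) ∨ (u ∉ A ∧ v ∈ A) then 1 else 0

/-- `λ_Q(k)`: the least `n` with `r(nQ) = k`. -/
noncomputable def lam (Q : G.V) (k : ℕ) : ℕ :=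
  sInf {n : ℕ | G.rank (G.pt Q (n : ℤ)) = (k : ℤ)}

end Multigraph

/-- `G` is the vertex gluing of `G₁` and `G₂` identifying `P₁` and `P₂` into `P`. -/
def IsVertexGluing (G G₁ G₂ : Multigraph) (P : G.V) (P₁ : G₁.V) (P₂ : G₂.V) : Prop :=
  ∃ (ι₁ : G₁.V → G.V) (ι₂ : G₂.V → G.V),
    Function.Injective ι₁ ∧ Function.Injective ι₂ ∧
    ι₁ P₁ = P ∧ ι₂ P₂ = P ∧
    (∀ a b, ι₁ a = ι₂ b → ι₁ a = P) ∧
    (∀ v : G.V, (∃ a, ι₁ a = v) ∨ (∃ b, ι₂ b = v)) ∧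
    (∀ a b, G.adj (ι₁ a) (ι₁ b) = G₁.adj a b) ∧
    (∀ a b, G.adj (ι₂ a) (ι₂ b) = G₂.adj a b) ∧
    (∀ a b, ι₁ a ≠ P → ι₂ b ≠ P → G.adj (ι₁ a) (ι₂ b) = 0)


/-!
If `r(nP) = k > r((n-1)P)`, some effective `E` of degree `k` has `|(n-1)P - E| = ∅`. On a simple
graph the chips of `E` at `P` can be moved, one at a time, to neighbours of `P` keeping
`|(n-1)P - E|` empty. This rests on: if `|D - P| = ∅` then `|D - Q| = ∅` for some neighbour `Q`
of `P`. Otherwise let `F` be the pointwise maximum of potentials `f_Q` (normalized by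
`f_Q(P) = 0`) of effective divisors in the `|D - Q|`. Every effective divisor in `|D|` vanishes at
`P`, so `D - ΔF` vanishes at some neighbour `Q` (else firing all vertices but `P` once would give
one that does not), and the maximum principle for `f_Q - F` at `P` gives `f_Q(Q) = F(Q)`, whence
`(D - Δf_Q)(Q) ≤ (D - ΔF)(Q) = 0`, contradicting `D - Q - Δf_Q ≥ 0`. Once `E(P) = 0`, every
effective divisor in `|nP - E|` vanishes at `P`, and minus its potential has a unique pole, of
order `n`, at `P`.
-/

namespace Multigraph

variable {G : Multigraph}

lemma lap_sub (f g : G.V → ℤ) : G.lap (f - g) = G.lap f - G.lap g := by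
  ext v
  simp only [lap, Pi.sub_apply, ← Finset.sum_sub_distrib]
  exact Finset.sum_congr rfl fun w _ => by ring

lemma lap_neg (f : G.V → ℤ) : G.lap (-f) = -G.lap f := by
  ext v
  simp only [lap, Pi.neg_apply, ← Finset.sum_neg_distrib]
  exact Finset.sum_congr rfl fun w _ => by ring

lemma lap_sub_const (f : G.V → ℤ) (c : ℤ) : G.lap (fun v => f v - c) = G.lap f := by
  ext v
  exact Finset.sum_congr rfl fun w _ => by ring

lemma sum_lap (f : G.V → ℤ) : ∑ v, G.lap f v = 0 := by
  have hswap : ∑ v, ∑ w, (G.adj v w : ℤ) * f w = ∑ v, ∑ w, (G.adj v w : ℤ) * f v := by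
    rw [Finset.sum_comm]
    exact Finset.sum_congr rfl fun v _ => Finset.sum_congr rfl fun w _ => by rw [G.adj_symm]
  simp only [lap, mul_sub, Finset.sum_sub_distrib, hswap, sub_self]

lemma lap_pt_of_ne {P v : G.V} (c : ℤ) (hv : v ≠ P) : G.lap (G.pt P c) v = -(G.adj v P * c) := by
  simp [lap, pt, hv]

lemma lap_nonneg_of_forall_le {g : G.V → ℤ} {v : G.V} (hv : ∀ w, g w ≤ g v) :
    0 ≤ G.lap g v :=
  Finset.sum_nonneg fun w _ => mul_nonneg (Nat.cast_nonneg _) (sub_nonneg.2 (hv w))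

lemma eq_of_forall_le_of_lap_eq_zero {g : G.V → ℤ} {v w : G.V} (hv : ∀ u, g u ≤ g v)
    (hlap : G.lap g v = 0) (hvw : G.adj v w ≠ 0) : g w = g v := by
  refine (hv w).antisymm (not_lt.1 fun hlt => hlap.not_gt ?_)
  refine Finset.sum_pos' (fun u _ => mul_nonneg (Nat.cast_nonneg _) (sub_nonneg.2 (hv u)))
    ⟨w, Finset.mem_univ w, mul_pos ?_ (sub_pos.2 hlt)⟩
  exact_mod_cast Nat.pos_of_ne_zero hvw

lemma lap_sup_le (f g : G.V → ℤ) (v : G.V) : G.lap (f ⊔ g) v ≤ max (G.lap f v) (G.lap g v) := by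
  have key : ∀ h, h ≤ f ⊔ g → h v = (f ⊔ g) v → G.lap (f ⊔ g) v ≤ G.lap h v := by
    intro h hle heq
    have := lap_nonneg_of_forall_le (g := h - f ⊔ g) (v := v)
      fun w => by simpa [heq] using hle w
    simpa [lap_sub] using this
  rcases le_total (g v) (f v) with hgf | hfg
  · exact (key f le_sup_left (by simp [hgf])).trans (le_max_left _ _)
  · exact (key g le_sup_right (by simp [hfg])).trans (le_max_right _ _)

lemma lap_sup'_le {ι : Type*} {s : Finset ι} (hs : s.Nonempty) {f : ι → G.V → ℤ}
    {D : G.V → ℤ} (hf : ∀ i ∈ s, ∀ v, G.lap (f i) v ≤ D v) (v : G.V) :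
    G.lap (s.sup' hs f) v ≤ D v := by
  revert v
  exact Finset.sup'_induction hs f (p := fun F => ∀ v, G.lap F v ≤ D v)
    (fun F₁ h₁ F₂ h₂ v => (lap_sup_le F₁ F₂ v).trans (max_le (h₁ v) (h₂ v))) hf

lemma pt_nonneg {P : G.V} {c : ℤ} (hc : 0 ≤ c) (v : G.V) : 0 ≤ G.pt P c v := by
  unfold pt; split_ifs <;> omega

lemma pt_sub (P : G.V) (a b : ℤ) : G.pt P a - G.pt P b = G.pt P (a - b) := by
  ext v
  by_cases hv : v = P <;> simp [pt, hv]

lemma deg_sub (D E : G.V → ℤ) : G.deg (D - E) = G.deg D - G.deg E := by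
  simp [deg, Finset.sum_sub_distrib]

lemma deg_add (D E : G.V → ℤ) : G.deg (D + E) = G.deg D + G.deg E := by
  simp [deg, Finset.sum_add_distrib]

lemma deg_pt (P : G.V) (c : ℤ) : G.deg (G.pt P c) = c := by
  simp [deg, pt]

lemma deg_nonneg_of_effective {E : G.V → ℤ} (hE : G.Effective E) : 0 ≤ G.deg E :=
  Finset.sum_nonneg fun v _ => hE v

lemma eq_zero_of_effective_of_deg_eq_zero {E : G.V → ℤ} (hE : G.Effective E)
    (hdeg : G.deg E = 0) : E = 0 :=
  funext fun v => (Finset.sum_eq_zero_iff_of_nonneg fun w _ => hE w).1 hdeg v (Finset.mem_univ v)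

lemma linNonempty_of_le {D D' : G.V → ℤ} (h : G.LinNonempty D) (hle : D ≤ D') :
    G.LinNonempty D' := by
  obtain ⟨f, hf⟩ := h
  exact ⟨f, fun v => by have := hf v; have := hle v; simp only [Pi.sub_apply] at *; omega⟩

lemma deg_nonneg_of_linNonempty {D : G.V → ℤ} (h : G.LinNonempty D) : 0 ≤ G.deg D := by
  obtain ⟨f, hf⟩ := h
  simpa [deg_sub, deg, sum_lap] using deg_nonneg_of_effective hf

lemma exists_lap_le_of_linNonempty {D : G.V → ℤ} (h : G.LinNonempty D) (P : G.V) :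
    ∃ f : G.V → ℤ, f P = 0 ∧ ∀ v, G.lap f v ≤ D v := by
  obtain ⟨f, hf⟩ := h
  exact ⟨fun v => f v - f P, sub_self _, fun v => by
    simpa [lap_sub_const, sub_nonneg] using hf v⟩

lemma linNonempty_sub_pt_of_lap_lt {D f : G.V → ℤ} {P : G.V} (hf : ∀ v, G.lap f v ≤ D v)
    (hP : G.lap f P < D P) : G.LinNonempty (D - G.pt P 1) := by
  refine ⟨f, fun v => ?_⟩
  by_cases hv : v = P
  · subst hv; simp only [Pi.sub_apply, pt, ↓reduceIte]; omega
  · simpa [pt, hv] using hf v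

def rankSet (D : G.V → ℤ) : Set ℕ :=
  {k | ∀ E : G.V → ℤ, G.Effective E → G.deg E = k → G.LinNonempty (D - E)}

lemma rank_of_linNonempty {D : G.V → ℤ} (h : G.LinNonempty D) :
    G.rank D = sSup (G.rankSet D) :=
  if_pos h

lemma neg_one_le_rank (D : G.V → ℤ) : -1 ≤ G.rank D := by
  unfold rank; split_ifs <;> omega

lemma linNonempty_of_rank_nonneg {D : G.V → ℤ} (h : 0 ≤ G.rank D) : G.LinNonempty D := by
  by_contra hD
  simp [rank, hD] at h

lemma zero_mem_rankSet {D : G.V → ℤ} (h : G.LinNonempty D) : 0 ∈ G.rankSet D := by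
  intro E hE hdeg
  simpa [eq_zero_of_effective_of_deg_eq_zero hE hdeg] using h

lemma bddAbove_rankSet (D : G.V → ℤ) : BddAbove (G.rankSet D) := by
  refine ⟨(G.deg D).toNat, fun k hk => ?_⟩
  let P : G.V := Classical.arbitrary _
  have := deg_nonneg_of_linNonempty (hk (G.pt P k) (pt_nonneg k.cast_nonneg) (deg_pt P k))
  rw [deg_sub, deg_pt] at this
  omega

lemma linNonempty_sub_of_deg_eq_rank {D E : G.V → ℤ} (hE : G.Effective E)
    (hdeg : G.deg E = G.rank D) : G.LinNonempty (D - E) := by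
  have hD := linNonempty_of_rank_nonneg (hdeg ▸ deg_nonneg_of_effective hE)
  have hmem := Nat.sSup_mem ⟨0, zero_mem_rankSet hD⟩ (bddAbove_rankSet D)
  exact hmem E hE (by rw [hdeg, rank_of_linNonempty hD])

lemma exists_not_linNonempty_sub_of_rank_lt {D : G.V → ℤ} {k : ℕ} (h : G.rank D < k) :
    ∃ E, G.Effective E ∧ G.deg E = k ∧ ¬ G.LinNonempty (D - E) := by
  by_contra! hk
  let P : G.V := Classical.arbitrary _
  have hD : G.LinNonempty D := linNonempty_of_le
    (hk (G.pt P k) (pt_nonneg k.cast_nonneg) (deg_pt P k)) (sub_le_self _ (pt_nonneg k.cast_nonneg))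
  rw [rank_of_linNonempty hD] at h
  exact h.not_ge (by exact_mod_cast le_csSup (bddAbove_rankSet D) hk)

lemma pt_le_pt_self {P : G.V} {c : ℤ} (hc : 0 ≤ c) (v : G.V) : G.pt P c v ≤ G.pt P c P := by
  by_cases hv : v = P <;> simp [pt, hv, hc]

lemma exists_adj_of_one_lt_card (h : 1 < Fintype.card G.V) (P : G.V) : ∃ Q, G.adj P Q ≠ 0 := by
  obtain ⟨v, hv⟩ := Fintype.exists_ne_of_one_lt_card h P
  rcases Relation.ReflTransGen.cases_head_iff.1 (G.conn P v) with hPv | ⟨Q, hQ, -⟩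
  · exact absurd hPv.symm hv
  · exact ⟨Q, hQ⟩

lemma exists_adj_lap_eq (hG : G.Simple) {D F : G.V → ℤ} {P : G.V}
    (hbase : ∀ f, (∀ v, G.lap f v ≤ D v) → G.lap f P = D P) (hF : ∀ v, G.lap F v ≤ D v) :
    ∃ Q, G.adj P Q ≠ 0 ∧ G.lap F Q = D Q := by
  by_contra! hslack
  -- Firing every vertex but `P` once; on a simple graph it costs each neighbour of `P` one chip.
  have hfired : ∀ v, G.lap (F - G.pt P 1) v ≤ D v := by
    intro v
    rw [lap_sub, Pi.sub_apply]
    by_cases hv : v = P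
    · subst hv
      linarith [hF v, lap_nonneg_of_forall_le (pt_le_pt_self (P := v) zero_le_one)]
    · rw [lap_pt_of_ne 1 hv]
      have hsimple := hG.1 v P
      rcases Nat.eq_zero_or_pos (G.adj v P) with h0 | hpos
      · simp [h0, hF v]
      · have := hslack v (by rw [G.adj_symm]; omega)
        have := hF v
        have : (G.adj v P : ℤ) = 1 := by exact_mod_cast le_antisymm hsimple hpos
        omega
  obtain ⟨Q, hQ⟩ := exists_adj_of_one_lt_card hG.2 P
  have hlap : G.lap (G.pt P 1) P = 0 := by
    rw [← sub_sub_cancel F (G.pt P 1), lap_sub, Pi.sub_apply, hbase F hF, hbase _ hfired, sub_self]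
  have := eq_of_forall_le_of_lap_eq_zero (pt_le_pt_self zero_le_one) hlap hQ
  have hQP : Q ≠ P := by rintro rfl; exact hQ (G.adj_loopless Q)
  simp [pt, hQP] at this

theorem linNonempty_sub_pt_of_forall_adj (hG : G.Simple) {D : G.V → ℤ} {P : G.V}
    (h : ∀ Q, G.adj P Q ≠ 0 → G.LinNonempty (D - G.pt Q 1)) :
    G.LinNonempty (D - G.pt P 1) := by
  by_contra hP
  have hbase : ∀ f, (∀ v, G.lap f v ≤ D v) → G.lap f P = D P := fun f hf =>
    (hf P).antisymm (not_lt.1 fun hlt => hP (linNonempty_sub_pt_of_lap_lt hf hlt))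
  obtain ⟨Q₀, hQ₀⟩ := exists_adj_of_one_lt_card hG.2 P
  let N := Finset.univ.filter fun Q => G.adj P Q ≠ 0
  have hN : N.Nonempty := ⟨Q₀, by simpa [N] using hQ₀⟩
  choose! f hfP hf using fun Q (hQ : Q ∈ N) =>
    exists_lap_le_of_linNonempty (h Q (by simpa [N] using hQ)) P
  have hfD : ∀ Q ∈ N, ∀ v, G.lap (f Q) v ≤ D v := fun Q hQ v =>
    (hf Q hQ v).trans (sub_le_self _ (pt_nonneg zero_le_one v))
  let F := N.sup' hN f
  have hFD : ∀ v, G.lap F v ≤ D v := lap_sup'_le hN hfD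
  have hFP : F P ≤ 0 := by
    simp only [F, Finset.sup'_apply]
    exact Finset.sup'_le _ _ fun Q hQ => (hfP Q hQ).le
  obtain ⟨Q, hQ, hFQ⟩ := exists_adj_lap_eq hG hbase hFD
  have hQN : Q ∈ N := by simpa [N] using hQ
  let g := f Q - F
  have hg : ∀ w, g w ≤ g P := fun w => by
    have : f Q w ≤ F w := Finset.le_sup' f hQN w
    simp only [g, Pi.sub_apply, hfP Q hQN]
    omega
  have hlap : G.lap g P = 0 := by
    rw [lap_sub, Pi.sub_apply, hbase _ (hfD Q hQN), hbase F hFD, sub_self]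
  have hgQ := eq_of_forall_le_of_lap_eq_zero hg hlap hQ
  have := lap_nonneg_of_forall_le (v := Q) fun w => hgQ ▸ hg w
  rw [lap_sub, Pi.sub_apply, hFQ] at this
  have := hf Q hQN Q
  simp only [Pi.sub_apply, pt, ↓reduceIte] at this
  omega

lemma exists_eq_zero_of_not_linNonempty_sub (hG : G.Simple) (P : G.V) {D E : G.V → ℤ}
    (hE : G.Effective E) (hDE : ¬ G.LinNonempty (D - E)) :
    ∃ E', G.Effective E' ∧ G.deg E' = G.deg E ∧ E' P = 0 ∧ ¬ G.LinNonempty (D - E') := by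
  obtain ⟨m, hm⟩ : ∃ m : ℕ, E P = m := ⟨(E P).toNat, (Int.toNat_of_nonneg (hE P)).symm⟩
  induction m generalizing E with
  | zero => exact ⟨E, hE, rfl, hm, hDE⟩
  | succ m ih =>
    obtain ⟨Q, hQ, hQD⟩ :
        ∃ Q, G.adj P Q ≠ 0 ∧ ¬ G.LinNonempty (D - E + G.pt P 1 - G.pt Q 1) := by
      by_contra! hall
      exact hDE (by simpa using linNonempty_sub_pt_of_forall_adj hG hall)
    have hQP : Q ≠ P := by rintro rfl; exact hQ (G.adj_loopless Q)
    let E' := E - G.pt P 1 + G.pt Q 1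
    have hE' : G.Effective E' := fun v => by
      have hEv := hE v
      by_cases hvP : v = P
      · subst hvP; simp [E', pt, hQP.symm, hm]
      · by_cases hvQ : v = Q
        · subst hvQ; simp only [E', Pi.add_apply, Pi.sub_apply, pt, hvP, ↓reduceIte]; omega
        · simpa [E', pt, hvP, hvQ] using hEv
    obtain ⟨E'', hE'', hdeg, hP, hD⟩ := ih hE'
      (by rwa [show D - E' = D - E + G.pt P 1 - G.pt Q 1 by simp only [E']; abel])
      (by simp [E', pt, hQP.symm, hm])
    refine ⟨E'', hE'', ?_, hP, hD⟩
    rw [hdeg, deg_add, deg_sub, deg_pt, deg_pt, sub_add_cancel]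

lemma mem_Hf_of_linNonempty_sub {P : G.V} {n : ℕ} {E : G.V → ℤ} (hE : G.Effective E)
    (hEP : E P = 0) (hn : G.LinNonempty (G.pt P n - E))
    (hn' : ¬ G.LinNonempty (G.pt P (n - 1) - E)) : n ∈ G.Hf P := by
  obtain ⟨f, hf⟩ := hn
  have hle : ∀ v, G.lap f v ≤ (G.pt P n - E) v := fun v => sub_nonneg.1 (hf v)
  have hfP : G.lap f P = n := by
    refine le_antisymm (by simpa [pt, hEP] using hle P) (not_lt.1 fun hlt => hn' ?_)
    rw [← pt_sub, sub_right_comm]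
    exact linNonempty_sub_pt_of_lap_lt hle (by simpa [pt, hEP] using hlt)
  refine ⟨-f, by rw [lap_neg, Pi.neg_apply, hfP], fun Q hQ => ?_⟩
  have hQle := hle Q
  simp only [Pi.sub_apply, pt, if_neg hQ] at hQle
  rw [lap_neg, Pi.neg_apply]
  linarith [hE Q]

end Multigraph

open Multigraph

/-- On a simple graph, the rank Weierstrass set is contained in the functional
Weierstrass set. -/
theorem Hr_subset_Hf (G : Multigraph) (hG : G.Simple) (P : G.V) :
    G.Hr P ⊆ G.Hf P := by
  intro n hn
  have hn : G.rank (G.pt P (n - 1)) < G.rank (G.pt P n) := hn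
  obtain ⟨k, hk⟩ : ∃ k : ℕ, G.rank (G.pt P n) = k :=
    Int.eq_ofNat_of_zero_le (by linarith [neg_one_le_rank (G.pt P (n - 1))])
  obtain ⟨E₀, hE₀, hdeg₀, hE₀n⟩ := exists_not_linNonempty_sub_of_rank_lt (hk ▸ hn)
  obtain ⟨E, hE, hdeg, hEP, hEn⟩ := exists_eq_zero_of_not_linNonempty_sub hG P hE₀ hE₀n
  exact mem_Hf_of_linNonempty_sub hE hEP
    (linNonempty_sub_of_deg_eq_rank hE (by rw [hdeg, hdeg₀, hk])) hEn
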